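/- Let C^1,...,C^n ∈ ℤ^{s₀×t} with entries bounded in absolute value by Δ, and let u_1,...,u_α ∈ ℤ^{nt}_{≥0} with ‖u_j‖₁ ≤ t(2sΔ+1)^s for all j. Writing C := [C^1 ··· C^n], there exists a permutation of the indices such that for every k ∈ {1,...,α}, ‖∑_{j=1}^k C u_j − (k/α) ∑_{j=1}^α C u_j‖_∞ ≤ s₀ · 2Δ · t(2sΔ+1)^s. -/

import Mathlib

/-!
Steinitz lemma in the form of Grinberg and Sevastyanov. Let `w_a` be vectors of norm at most `c`
summing to zero in a `d`-dimensional normed space. The order is built from the back: we keep a set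
`A` of indices and weights `λ ∈ [0,1]^A` with `∑ λ_a = |A| - d` and `∑ λ_a w_a = 0`, starting
from the constant weights `(|A| - d) / |A|`. Rescale `λ` to total `|A| - d - 1` and pass to a vertex
of the polytope cut out by these constraints. The vertex has at most `d + 1` fractional
coordinates, so one coordinate `a` is zero. Remove `a` from `A` and put it last. For every prefix
`A` with `|A| > d`, `∑_A w_a = ∑_A (1 - λ_a) w_a`, which has norm at most `d c`, and shorter
prefixes are bounded by `d c` trivially.

The theorem applies this in `(ℝ^{s₀}, ‖·‖_∞)` to the centred vectors `C u_j - (1/α) ∑ C u_j`, each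
of norm at most `2 Δ t (2sΔ+1)^s`.
-/

open Finset Module Filter Topology

theorem exists_ne_zero_affine_relation_of_finrank_succ_lt_card {K E ι : Type*} [Field K]
    [AddCommGroup E] [Module K E] [FiniteDimensional K E] (v : ι → E) {F : Finset ι}
    (hF : finrank K E + 1 < #F) :
    ∃ g : ι → K, (∀ a ∉ F, g a = 0) ∧ g ≠ 0 ∧ ∑ a ∈ F, g a = 0 ∧ ∑ a ∈ F, g a • v a = 0 := by
  classical
  have hdep : ¬LinearIndepOn K (fun a => (v a, (1 : K))) (F : Set ι) := fun h => by
    have := h.fintype_card_le_finrank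
    simp only [coe_sort_coe, Fintype.card_coe, finrank_prod, finrank_self] at this
    omega
  obtain ⟨f, hf, a, ha, hfa⟩ :
      ∃ f : ι → K, ∑ a ∈ F, f a • (v a, (1 : K)) = 0 ∧ ∃ a ∈ F, f a ≠ 0 := by
    simpa [linearIndepOn_finset_iff] using hdep
  simp only [Prod.smul_mk, smul_eq_mul, mul_one, Prod.ext_iff, Prod.fst_sum, Prod.snd_sum,
    Prod.fst_zero, Prod.snd_zero] at hf
  refine ⟨fun a => if a ∈ F then f a else 0, fun b hb => if_neg hb,
    fun h => hfa (by simpa [ha] using congrFun h a), ?_, ?_⟩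
  · simpa [Finset.sum_ite_mem] using hf.2
  · simpa [Finset.sum_ite_mem, ite_smul] using hf.1

theorem exists_perm_map_filter_lt_eq_toFinset_take {α : ℕ} (l : List (Fin α)) (hnd : l.Nodup)
    (hl : l.toFinset = univ) :
    ∃ π : Equiv.Perm (Fin α), ∀ k,
      (univ.filter fun j : Fin α => (j : ℕ) < k).map π.toEmbedding = (l.take k).toFinset := by
  have hmem : ∀ a, a ∈ l := fun a => List.mem_toFinset.1 (hl ▸ mem_univ a)
  have hlen : l.length = α := by
    simpa [hl] using (List.toFinset_card_of_nodup hnd).symm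
  refine ⟨(finCongr hlen.symm).trans (hnd.getEquivOfForallMemList l hmem), fun k => ?_⟩
  ext a
  simp only [Finset.mem_map, Equiv.coe_toEmbedding, Equiv.trans_apply, finCongr_apply,
    List.Nodup.getEquivOfForallMemList_apply, mem_filter, mem_univ, true_and, List.mem_toFinset,
    List.mem_take_iff_getElem]
  constructor
  · rintro ⟨j, hjk, rfl⟩
    exact ⟨j, lt_min hjk (hlen.symm ▸ j.2), rfl⟩
  · rintro ⟨j, hj, rfl⟩
    exact ⟨⟨j, hlen ▸ (lt_min_iff.1 hj).2⟩, (lt_min_iff.1 hj).1, rfl⟩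

section SteinitzPolytope

variable {ι E : Type*} [NormedAddCommGroup E] [NormedSpace ℝ E]

/-- Coordinates outside `A` are only required to lie in `[0, 1]`; this keeps the set compact. -/
def steinitzPolytope (w : ι → E) (A : Finset ι) (r : ℝ) : Set (ι → ℝ) :=
  {x | (∀ a, x a ∈ Set.Icc 0 1) ∧ ∑ a ∈ A, x a = r ∧ ∑ a ∈ A, x a • w a = 0}

variable {w : ι → E} {A : Finset ι} {r : ℝ} {x : ι → ℝ}

theorem isCompact_steinitzPolytope : IsCompact (steinitzPolytope w A r) := by
  refine (isCompact_univ_pi fun _ => isCompact_Icc).of_isClosed_subset ?_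
    fun x hx a _ => hx.1 a
  simp only [steinitzPolytope, Set.ofPred_and, Set.ofPred_forall]
  refine (isClosed_iInter fun a => isClosed_Icc.preimage (continuous_apply a)).inter
    ((isClosed_eq ?_ continuous_const).inter (isClosed_eq ?_ continuous_const)) <;> fun_prop

theorem one_mem_steinitzPolytope (h : ∑ a ∈ A, w a = 0) : 1 ∈ steinitzPolytope w A #A :=
  ⟨fun _ => ⟨zero_le_one, le_rfl⟩, by simp, by simpa using h⟩

theorem smul_mem_steinitzPolytope (hx : x ∈ steinitzPolytope w A r) {t : ℝ}
    (ht : t ∈ Set.Icc 0 1) : t • x ∈ steinitzPolytope w A (t * r) := by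
  obtain ⟨hbox, hsum, hsmul⟩ := hx
  refine ⟨fun a => ⟨mul_nonneg ht.1 (hbox a).1, mul_le_one₀ ht.2 (hbox a).1 (hbox a).2⟩, ?_, ?_⟩
  · simp [← Finset.mul_sum, hsum]
  · simp [mul_smul, ← Finset.smul_sum, hsmul]

theorem steinitzPolytope_nonempty_of_le (hx : x ∈ steinitzPolytope w A r) {r' : ℝ}
    (h0 : 0 ≤ r') (hr : r' ≤ r) : (steinitzPolytope w A r').Nonempty := by
  have ht : r' / r ∈ Set.Icc 0 1 :=
    ⟨div_nonneg h0 (h0.trans hr), div_le_one_of_le₀ hr (h0.trans hr)⟩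
  have hr' : r' / r * r = r' := div_mul_cancel_of_imp fun h => le_antisymm (h ▸ hr) h0
  exact ⟨_, hr' ▸ smul_mem_steinitzPolytope hx ht⟩

theorem eventually_add_smul_mem_steinitzPolytope (hx : x ∈ steinitzPolytope w A r) {g : ι → ℝ}
    (hgA : ∀ a ∉ A, g a = 0) (hg_sum : ∑ a ∈ A, g a = 0) (hg_smul : ∑ a ∈ A, g a • w a = 0)
    (hfrac : ∀ a, g a ≠ 0 → x a ∈ Set.Ioo 0 1) :
    ∀ᶠ ε in 𝓝 (0 : ℝ), x + ε • g ∈ steinitzPolytope w A r := by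
  have hbox : ∀ a ∈ A, ∀ᶠ ε in 𝓝 (0 : ℝ), x a + ε * g a ∈ Set.Icc 0 1 := by
    intro a _
    by_cases hga : g a = 0
    · simp only [hga, mul_zero, add_zero]
      exact Eventually.of_forall fun _ => hx.1 a
    · have hlim : Tendsto (fun ε : ℝ => x a + ε * g a) (𝓝 0) (𝓝 (x a)) := by
        have : Continuous fun ε : ℝ => x a + ε * g a := by fun_prop
        simpa using this.tendsto 0
      exact (hlim.eventually (isOpen_Ioo.mem_nhds (hfrac a hga))).mono
        fun _ h => Set.Ioo_subset_Icc_self h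
  refine ((eventually_all_finset A).2 hbox).mono fun ε hε => ⟨fun a => ?_, ?_, ?_⟩
  · by_cases ha : a ∈ A
    · exact hε a ha
    · simpa [hgA a ha] using hx.1 a
  · simp [Finset.sum_add_distrib, ← Finset.mul_sum, hg_sum, hx.2.1]
  · simp [add_smul, Finset.sum_add_distrib, mul_smul, ← Finset.smul_sum, hg_smul, hx.2.2]

theorem norm_sum_le_of_mem_steinitzPolytope (hx : x ∈ steinitzPolytope w A (#A - finrank ℝ E))
    {c : ℝ} (hw : ∀ a, ‖w a‖ ≤ c) : ‖∑ a ∈ A, w a‖ ≤ finrank ℝ E * c := by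
  obtain ⟨hbox, hsum, hsmul⟩ := hx
  have hdefect : ∑ a ∈ A, w a = ∑ a ∈ A, (1 - x a) • w a := by
    simp [sub_smul, sum_sub_distrib, hsmul]
  calc ‖∑ a ∈ A, w a‖ ≤ ∑ a ∈ A, (1 - x a) * c := by
        rw [hdefect]
        refine norm_sum_le_of_le _ fun a _ => ?_
        rw [norm_smul, Real.norm_of_nonneg (by linarith [(hbox a).2])]
        exact mul_le_mul_of_nonneg_left (hw a) (by linarith [(hbox a).2])
    _ = finrank ℝ E * c := by
        rw [← sum_mul, sum_sub_distrib, hsum]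
        simp

variable [FiniteDimensional ℝ E]

theorem card_filter_mem_Ioo_le_of_mem_extremePoints_steinitzPolytope
    (hx : x ∈ (steinitzPolytope w A r).extremePoints ℝ) :
    #{a ∈ A | x a ∈ Set.Ioo 0 1} ≤ finrank ℝ E + 1 := by
  classical
  by_contra! hcard
  set F := {a ∈ A | x a ∈ Set.Ioo 0 1}
  obtain ⟨g, hgF, hg0, hg_sumF, hg_smulF⟩ :=
    exists_ne_zero_affine_relation_of_finrank_succ_lt_card w hcard
  have hFA : F ⊆ A := filter_subset _ _
  have hgA : ∀ a ∉ A, g a = 0 := fun a ha => hgF a fun h => ha (hFA h)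
  have hfrac : ∀ a, g a ≠ 0 → x a ∈ Set.Ioo 0 1 := fun a ha => by
    by_contra h
    exact ha (hgF a fun haF => h (mem_filter.1 haF).2)
  have hg_sum : ∑ a ∈ A, g a = 0 := by
    rwa [← sum_subset hFA fun a _ ha => hgF a ha]
  have hg_smul : ∑ a ∈ A, g a • w a = 0 := by
    rwa [← sum_subset hFA fun a _ ha => by simp [hgF a ha]]
  have hnear : ∀ᶠ ε in 𝓝[≠] (0 : ℝ), ε ≠ 0 ∧ x + ε • g ∈ steinitzPolytope w A r ∧
      x + ε • -g ∈ steinitzPolytope w A r := by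
    refine eventually_mem_nhdsWithin.and (Eventually.filter_mono nhdsWithin_le_nhds ?_)
    exact (eventually_add_smul_mem_steinitzPolytope hx.1 hgA hg_sum hg_smul hfrac).and
      (eventually_add_smul_mem_steinitzPolytope hx.1 (by simpa using hgA) (by simp [hg_sum])
        (by simp [hg_smul]) (by simpa using hfrac))
  obtain ⟨ε, hε, hplus, hminus⟩ := hnear.exists
  have hmid : x ∈ openSegment ℝ (x + ε • g) (x + ε • -g) :=
    ⟨1 / 2, 1 / 2, by norm_num, by norm_num, by norm_num, by module⟩
  have h := ((mem_extremePoints.1 hx).2 _ hplus _ hminus hmid).1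
  rw [add_eq_left, smul_eq_zero] at h
  exact h.elim hε hg0

theorem exists_eq_zero_of_mem_extremePoints_steinitzPolytope
    (hx : x ∈ (steinitzPolytope w A (#A - finrank ℝ E - 1)).extremePoints ℝ) :
    ∃ a ∈ A, x a = 0 := by
  classical
  by_contra! hpos
  have hcard := card_filter_mem_Ioo_le_of_mem_extremePoints_steinitzPolytope hx
  obtain ⟨⟨hbox, hsum, -⟩, -⟩ := hx
  set F := {a ∈ A | x a ∈ Set.Ioo 0 1}
  -- On `A \ F` the coordinates of `x` equal `1`, so the defect `∑ (1 - x a)` lives on `F`.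
  have hdefect : ∑ a ∈ A, (1 - x a) = ∑ a ∈ F, (1 - x a) := by
    refine (sum_subset (filter_subset _ _) fun a ha haF => ?_).symm
    have : x a = 1 := by
      by_contra h
      exact haF (mem_filter.2 ⟨ha, lt_of_le_of_ne (hbox a).1 (hpos a ha).symm,
        lt_of_le_of_ne (hbox a).2 h⟩)
    rw [this, sub_self]
  have hlt : ∑ a ∈ F, (1 - x a) < finrank ℝ E + 1 := by
    rcases F.eq_empty_or_nonempty with hF | hF
    · rw [hF, sum_empty]; positivity
    · calc ∑ a ∈ F, (1 - x a) < ∑ a ∈ F, (1 : ℝ) :=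
            sum_lt_sum_of_nonempty hF fun a ha => by linarith [(mem_filter.1 ha).2.1]
        _ ≤ finrank ℝ E + 1 := by
          rw [sum_const, nsmul_one]; exact_mod_cast hcard
  rw [← hdefect, sum_sub_distrib, hsum, sum_const, nsmul_one] at hlt
  linarith

theorem exists_erase_steinitzPolytope_nonempty [DecidableEq ι] (hA : finrank ℝ E < #A)
    (hP : (steinitzPolytope w A (#A - finrank ℝ E)).Nonempty) :
    ∃ a ∈ A, (steinitzPolytope w (A.erase a) (#(A.erase a) - finrank ℝ E)).Nonempty := by
  obtain ⟨x, hx⟩ := hP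
  have hAd : (finrank ℝ E : ℝ) + 1 ≤ #A := by exact_mod_cast hA
  obtain ⟨y, hy⟩ := isCompact_steinitzPolytope.extremePoints_nonempty
    (steinitzPolytope_nonempty_of_le hx (r' := #A - finrank ℝ E - 1) (by linarith) (by linarith))
  obtain ⟨a, ha, hya⟩ := exists_eq_zero_of_mem_extremePoints_steinitzPolytope hy
  obtain ⟨hbox, hsum, hsmul⟩ := hy.1
  refine ⟨a, ha, y, hbox, ?_, ?_⟩
  · rw [sum_erase _ hya, hsum, cast_card_erase_of_mem ha]
    ring
  · rwa [sum_erase _ (by simp [hya])]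

theorem exists_list_norm_sum_take_le [DecidableEq ι] {c : ℝ} (hc : 0 ≤ c)
    (hw : ∀ a, ‖w a‖ ≤ c) (A : Finset ι)
    (hA : finrank ℝ E < #A → (steinitzPolytope w A (#A - finrank ℝ E)).Nonempty) :
    ∃ l : List ι, l.Nodup ∧ l.toFinset = A ∧
      ∀ k, ‖∑ a ∈ (l.take k).toFinset, w a‖ ≤ finrank ℝ E * c := by
  induction A using Finset.strongInduction with
  | H A ih =>
  by_cases hd : finrank ℝ E < #A
  · obtain ⟨a, ha, hPa⟩ := exists_erase_steinitzPolytope_nonempty hd (hA hd)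
    obtain ⟨l, hnd, hl, hpre⟩ := ih (A.erase a) (erase_ssubset ha) fun _ => hPa
    have hal : a ∉ l := fun h => by simpa [hl] using List.mem_toFinset.2 h
    have hlA : (l ++ [a]).toFinset = A := by simp [hl, insert_erase ha]
    refine ⟨l ++ [a], List.concat_eq_append ▸ hnd.concat hal, hlA, fun k => ?_⟩
    rcases le_or_gt k l.length with hk | hk
    · rw [List.take_append_of_le_length hk]
      exact hpre k
    · rw [List.take_of_length_le (by rw [List.length_append, List.length_singleton]; omega), hlA]
      exact norm_sum_le_of_mem_steinitzPolytope (hA hd).some_mem hw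
  · refine ⟨A.toList, nodup_toList A, toList_toFinset A, fun k => ?_⟩
    have hcard : #(A.toList.take k).toFinset ≤ finrank ℝ E :=
      (List.toFinset_card_le _).trans ((List.length_take_le' k _).trans
        ((length_toList A).trans_le (not_lt.1 hd)))
    calc ‖∑ a ∈ (A.toList.take k).toFinset, w a‖
        ≤ #(A.toList.take k).toFinset * c := by
          simpa using norm_sum_le_of_le _ fun a _ => hw a
      _ ≤ finrank ℝ E * c := by gcongr

theorem exists_perm_norm_sum_filter_lt_le {α : ℕ} (w : Fin α → E) {c : ℝ} (hc : 0 ≤ c)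
    (hw : ∀ j, ‖w j‖ ≤ c) (hsum : ∑ j, w j = 0) :
    ∃ π : Equiv.Perm (Fin α), ∀ k,
      ‖∑ j ∈ univ.filter (fun j : Fin α => (j : ℕ) < k), w (π j)‖ ≤ finrank ℝ E * c := by
  have hP : finrank ℝ E < #(univ : Finset (Fin α)) →
      (steinitzPolytope w univ (#univ - finrank ℝ E)).Nonempty := fun hd =>
    steinitzPolytope_nonempty_of_le (one_mem_steinitzPolytope hsum)
      (sub_nonneg.2 (by exact_mod_cast hd.le)) (sub_le_self _ (Nat.cast_nonneg _))
  obtain ⟨l, hnd, hl, hpre⟩ := exists_list_norm_sum_take_le hc hw univ hP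
  obtain ⟨π, hπ⟩ := exists_perm_map_filter_lt_eq_toFinset_take l hnd hl
  exact ⟨π, fun k => by simpa [← hπ k, sum_map] using hpre k⟩

end SteinitzPolytope

theorem abs_sum_mulVec_apply_le {R m n p : Type*} [CommRing R] [LinearOrder R]
    [IsStrictOrderedRing R] [Fintype n] [Fintype p] (C : n → Matrix m p R) {Δ : R}
    (hC : ∀ l i q, |C l i q| ≤ Δ) (v : n → p → R) (i : m) :
    |∑ l, (C l).mulVec (v l) i| ≤ Δ * ∑ l, ∑ q, |v l q| := by
  rw [mul_sum]
  refine (abs_sum_le_sum_abs _ _).trans (sum_le_sum fun l _ => ?_)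
  change |∑ q, C l i q * v l q| ≤ _
  rw [mul_sum]
  refine (abs_sum_le_sum_abs _ _).trans (sum_le_sum fun q _ => ?_)
  rw [abs_mul]
  exact mul_le_mul_of_nonneg_right (hC l i q) (abs_nonneg _)

section Average

variable {ι E : Type*} [Fintype ι]

theorem sum_sub_card_inv_smul_sum [AddCommGroup E] [Module ℝ E] (w : ι → E) :
    ∑ j, (w j - (Fintype.card ι : ℝ)⁻¹ • ∑ i, w i) = 0 := by
  rcases isEmpty_or_nonempty ι with hι | hι
  · simp
  · rw [sum_sub_distrib, sum_const, card_univ, ← Nat.cast_smul_eq_nsmul ℝ, smul_inv_smul₀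
      (by positivity), sub_self]

theorem norm_sub_card_inv_smul_sum_le [SeminormedAddCommGroup E] [NormedSpace ℝ E] (w : ι → E)
    {c : ℝ} (hw : ∀ j, ‖w j‖ ≤ c) (j : ι) :
    ‖w j - (Fintype.card ι : ℝ)⁻¹ • ∑ i, w i‖ ≤ 2 * c := by
  have hι : (0 : ℝ) < Fintype.card ι := by exact_mod_cast Fintype.card_pos_iff.2 ⟨j⟩
  have hmean : ‖(Fintype.card ι : ℝ)⁻¹ • ∑ i, w i‖ ≤ c := by
    rw [norm_smul, norm_inv, Real.norm_natCast, inv_mul_le_iff₀ hι]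
    simpa using norm_sum_le_of_le univ fun i _ => hw i
  linarith [norm_sub_le (w j) ((Fintype.card ι : ℝ)⁻¹ • ∑ i, w i), hw j]

end Average

theorem stmt14_general (s₀ s t n α : ℕ) (Δ : ℕ)
    (C : Fin n → Matrix (Fin s₀) (Fin t) ℤ)
    (hC : ∀ j i l, |C j i l| ≤ (Δ:ℤ))
    (u : Fin α → Fin n → Fin t → ℤ)
    (hu_norm : ∀ j, ∑ i, ∑ l, |u j i l| ≤ (t:ℤ) * (2 * s * Δ + 1)^s) :
    ∃ π : Equiv.Perm (Fin α), ∀ k : ℕ, 1 ≤ k → k ≤ α → ∀ i : Fin s₀,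
      |((∑ j ∈ Finset.univ.filter (fun j : Fin α => (j:ℕ) < k),
            ∑ l, ((C l).mulVec (u (π j) l) i : ℝ))
        - ((k:ℝ) / α) * ∑ j, ∑ l, ((C l).mulVec (u j l) i : ℝ))|
      ≤ (s₀:ℝ) * (2 * Δ) * (t * (2 * s * Δ + 1)^s) := by
  let Y : Fin α → Fin s₀ → ℝ := fun j i => ∑ l, ((C l).mulVec (u j l) i : ℝ)
  have hY : ∀ j, ‖Y j‖ ≤ Δ * (t * (2 * s * Δ + 1) ^ s) := fun j =>
    (pi_norm_le_iff_of_nonneg (by positivity)).2 fun i => by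
      show |∑ l, ((C l).mulVec (u j l) i : ℝ)| ≤ _
      exact_mod_cast (abs_sum_mulVec_apply_le C hC (u j) i).trans
        (mul_le_mul_of_nonneg_left (hu_norm j) (Nat.cast_nonneg Δ))
  obtain ⟨π, hπ⟩ := exists_perm_norm_sum_filter_lt_le _ (by positivity)
    (norm_sub_card_inv_smul_sum_le Y hY) (sum_sub_card_inv_smul_sum Y)
  refine ⟨π, fun k _ hk i => ?_⟩
  have hcard : #(univ.filter fun j : Fin α => (j : ℕ) < k) = k := by
    simp [Fin.card_filter_val_lt, hk]
  have key := (norm_le_pi_norm _ i).trans (hπ k)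
  rw [Real.norm_eq_abs, finrank_fin_fun] at key
  refine le_of_eq_of_le ?_ (key.trans_eq (by ring))
  congr 1
  simp only [Finset.sum_apply, Pi.sub_apply, Pi.smul_apply, smul_eq_mul, sum_sub_distrib,
    sum_const, hcard, nsmul_eq_mul, Fintype.card_fin, Y]
  ring

theorem stmt14 (s₀ s t n α : ℕ) (Δ : ℕ)
    (C : Fin n → Matrix (Fin s₀) (Fin t) ℤ)
    (hC : ∀ j i l, |C j i l| ≤ (Δ:ℤ))
    (u : Fin α → Fin n → Fin t → ℤ)
    (hu_nonneg : ∀ j i l, 0 ≤ u j i l)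
    (hu_norm : ∀ j, ∑ i, ∑ l, |u j i l| ≤ (t:ℤ) * (2 * s * Δ + 1)^s) :
    ∃ π : Equiv.Perm (Fin α), ∀ k : ℕ, 1 ≤ k → k ≤ α → ∀ i : Fin s₀,
      |((∑ j ∈ Finset.univ.filter (fun j : Fin α => (j:ℕ) < k),
            ∑ l, ((C l).mulVec (u (π j) l) i : ℝ))
        - ((k:ℝ) / α) * ∑ j, ∑ l, ((C l).mulVec (u j l) i : ℝ))|
      ≤ (s₀:ℝ) * (2 * Δ) * (t * (2 * s * Δ + 1)^s) :=
  stmt14_general s₀ s t n α Δ C hC u hu_norm
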